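/- arXiv:1303.1056 — 2 statements merged into one kernel-verified Lean document; each statement's English description precedes it below -/
import Mathlib

section
/- The vertical lift ^V X of a vector field X on M_n to the tangent bundle T(M_n) equipped with the synectic metric ^S g is a Killing vector field on T(M_n) if and only if X is a Killing vector field on (M_n, g). -/
open scoped BigOperators

noncomputable section

namespace Synectic

variable {n : ℕ}

/-- Partial derivative `∂_j f` of a real-valued function on `ℝⁿ` (global chart of `M_n`). -/
def pd (f : (Fin n → ℝ) → ℝ) (j : Fin n) (x : Fin n → ℝ) : ℝ :=
  fderiv ℝ f x (Pi.single j 1)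

/-- Christoffel symbols `Γ^h_{ji}` of the metric `g` with inverse `ginv`. -/
def Christoffel (g ginv : (Fin n → ℝ) → Fin n → Fin n → ℝ) (h j i : Fin n)
    (x : Fin n → ℝ) : ℝ :=
  (1 / 2) * ∑ s, ginv x h s *
    (pd (fun z => g z s i) j x + pd (fun z => g z j s) i x - pd (fun z => g z j i) s x)

/-- Covariant derivative `∇_j X^h` of a vector field. -/
def covVec (g ginv : (Fin n → ℝ) → Fin n → Fin n → ℝ)
    (X : (Fin n → ℝ) → Fin n → ℝ) (j h : Fin n) (x : Fin n → ℝ) : ℝ :=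
  pd (fun z => X z h) j x + ∑ i, Christoffel g ginv h j i x * X x i

/-- Covariant derivative `∇_j ω_i` of a covector field. -/
def covCov (g ginv : (Fin n → ℝ) → Fin n → Fin n → ℝ)
    (ω : (Fin n → ℝ) → Fin n → ℝ) (j i : Fin n) (x : Fin n → ℝ) : ℝ :=
  pd (fun z => ω z i) j x - ∑ k, Christoffel g ginv k j i x * ω x k

/-- Covariant derivative `∇_s a_{ji}` of a `(0,2)`-tensor field. -/
def cov2 (g ginv : (Fin n → ℝ) → Fin n → Fin n → ℝ)
    (a : (Fin n → ℝ) → Fin n → Fin n → ℝ) (s j i : Fin n) (x : Fin n → ℝ) : ℝ :=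
  pd (fun z => a z j i) s x - ∑ l, Christoffel g ginv l s j x * a x l i
    - ∑ l, Christoffel g ginv l s i x * a x j l

/-- The tensor `H^h_{ji} = (1/2) g^{hs} (∇_j a_{si} + ∇_i a_{js} - ∇_s a_{ji})`. -/
def Hcoef (g ginv a : (Fin n → ℝ) → Fin n → Fin n → ℝ) (h j i : Fin n)
    (x : Fin n → ℝ) : ℝ :=
  (1 / 2) * ∑ s, ginv x h s *
    (cov2 g ginv a j s i x + cov2 g ginv a i j s x - cov2 g ginv a s j i x)

/-- Components `R_{kji}{}^h` of the Riemann curvature tensor of `g`. -/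
def Riem (g ginv : (Fin n → ℝ) → Fin n → Fin n → ℝ) (k j i h : Fin n)
    (x : Fin n → ℝ) : ℝ :=
  pd (fun z => Christoffel g ginv h j i z) k x - pd (fun z => Christoffel g ginv h k i z) j x
    + ∑ m, Christoffel g ginv m j i x * Christoffel g ginv h k m x
    - ∑ m, Christoffel g ginv m k i x * Christoffel g ginv h j m x

/-- The covector field `X_i = g_{ih} X^h` associated with a vector field `X`. -/
def lower (g : (Fin n → ℝ) → Fin n → Fin n → ℝ) (X : (Fin n → ℝ) → Fin n → ℝ)
    (x : Fin n → ℝ) (i : Fin n) : ℝ :=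
  ∑ h, g x i h * X x h

/-- A point of the tangent bundle `T(M_n)` in induced coordinates `(xʰ, yʰ)`. -/
abbrev TPt (n : ℕ) := (Fin n → ℝ) × (Fin n → ℝ)

/-- Index type for induced coordinates on `T(M_n)`: `inl` = base indices, `inr` = fibre indices. -/
abbrev Idx (n : ℕ) := Fin n ⊕ Fin n

/-- Coordinate directions on `T(M_n)`. -/
def eIdx : Idx n → TPt n
  | Sum.inl j => (Pi.single j 1, 0)
  | Sum.inr j => (0, Pi.single j 1)

/-- Partial derivative `∂_A f` on `T(M_n)` (`∂_j` for `A = inl j`, `∂_{j̄}` for `A = inr j`). -/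
def pdT (f : TPt n → ℝ) (A : Idx n) (p : TPt n) : ℝ :=
  fderiv ℝ f p (eIdx A)

/-- Covariant components of the synectic metric `^S g = ^C g + ^V a` on `T(M_n)`. -/
def synMetric (g a : (Fin n → ℝ) → Fin n → Fin n → ℝ) (p : TPt n) :
    Idx n → Idx n → ℝ
  | Sum.inl j, Sum.inl i => a p.1 j i + ∑ s, p.2 s * pd (fun z => g z j i) s p.1
  | Sum.inl j, Sum.inr i => g p.1 j i
  | Sum.inr j, Sum.inl i => g p.1 j i
  | Sum.inr _, Sum.inr _ => 0

/-- Contravariant components of the synectic metric. -/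
def synMetricInv (ginv a : (Fin n → ℝ) → Fin n → Fin n → ℝ) (p : TPt n) :
    Idx n → Idx n → ℝ
  | Sum.inl _, Sum.inl _ => 0
  | Sum.inl j, Sum.inr i => ginv p.1 j i
  | Sum.inr j, Sum.inl i => ginv p.1 j i
  | Sum.inr j, Sum.inr i =>
      ∑ s, p.2 s * pd (fun z => ginv z j i) s p.1
        - ∑ t, ∑ s, ginv p.1 j t * a p.1 t s * ginv p.1 s i

/-- Vertical lift `^V X` of a vector field, with components `(0, Xʰ)`. -/
def vlift (X : (Fin n → ℝ) → Fin n → ℝ) (p : TPt n) : Idx n → ℝ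
  | Sum.inl _ => 0
  | Sum.inr h => X p.1 h

/-- Complete lift `^C X` of a vector field, with components `(Xʰ, yˢ ∂_s Xʰ)`. -/
def clift (X : (Fin n → ℝ) → Fin n → ℝ) (p : TPt n) : Idx n → ℝ
  | Sum.inl h => X p.1 h
  | Sum.inr h => ∑ s, p.2 s * pd (fun z => X z h) s p.1

/-- Horizontal lift `^H X` of a vector field, with components `(Xʰ, -yˢ Γʰ_{si} Xⁱ)`. -/
def hlift (g ginv : (Fin n → ℝ) → Fin n → Fin n → ℝ)
    (X : (Fin n → ℝ) → Fin n → ℝ) (p : TPt n) : Idx n → ℝ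
  | Sum.inl h => X p.1 h
  | Sum.inr h => -∑ s, ∑ i, p.2 s * Christoffel g ginv h s i p.1 * X p.1 i

/-- Components of the Lie derivative `(𝓛_V G)_{AB}` of a metric `G` on `T(M_n)` along `V`. -/
def lieDerivT (G : TPt n → Idx n → Idx n → ℝ) (V : TPt n → Idx n → ℝ)
    (A B : Idx n) (p : TPt n) : ℝ :=
  ∑ C, (V p C * pdT (fun q => G q A B) C p
      + G p A C * pdT (fun q => V q C) B p
      + G p C B * pdT (fun q => V q C) A p)

/-- `V` is a Killing vector field of the metric `G` on `T(M_n)`. -/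
def IsKillingT (G : TPt n → Idx n → Idx n → ℝ) (V : TPt n → Idx n → ℝ) : Prop :=
  ∀ p A B, lieDerivT G V A B p = 0

/-- Christoffel symbols of a metric `G` (with inverse `Ginv`) on `T(M_n)`. -/
def ChristoffelT (G Ginv : TPt n → Idx n → Idx n → ℝ) (A B C : Idx n) (p : TPt n) : ℝ :=
  (1 / 2) * ∑ D, Ginv p A D *
    (pdT (fun q => G q D C) B p + pdT (fun q => G q B D) C p - pdT (fun q => G q B C) D p)

/-- Covariant derivative `∇_B ω_A` on `T(M_n)` of a covector field w.r.t. the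
Levi-Civita connection of `(G, Ginv)`. -/
def covCovT (G Ginv : TPt n → Idx n → Idx n → ℝ) (ω : TPt n → Idx n → ℝ)
    (B A : Idx n) (p : TPt n) : ℝ :=
  pdT (fun q => ω q A) B p - ∑ C, ChristoffelT G Ginv C B A p * ω p C

/-- Covariant derivative `∇_B V^A` on `T(M_n)` of a vector field w.r.t. a linear
connection given by its components `Conn^A_{BC}`. -/
def covVecT (Conn : Idx n → Idx n → Idx n → TPt n → ℝ) (V : TPt n → Idx n → ℝ)
    (B A : Idx n) (p : TPt n) : ℝ :=
  pdT (fun q => V q A) B p + ∑ C, Conn A B C p * V p C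

/-- Components `Γ̃^A_{BC}` of the metric connection `∇̃` of the synectic metric. -/
def GammaTilde (g ginv a : (Fin n → ℝ) → Fin n → Fin n → ℝ) :
    Idx n → Idx n → Idx n → TPt n → ℝ
  | Sum.inl h, Sum.inl j, Sum.inl i => fun p => Christoffel g ginv h j i p.1
  | Sum.inr h, Sum.inr j, Sum.inl i => fun p => Christoffel g ginv h j i p.1
  | Sum.inr h, Sum.inl j, Sum.inr i => fun p => Christoffel g ginv h j i p.1
  | Sum.inr h, Sum.inl j, Sum.inl i => fun p =>
      (∑ t, p.2 t * pd (fun z => Christoffel g ginv h j i z) t p.1)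
        + Hcoef g ginv a h j i p.1 - ∑ k, p.2 k * Riem g ginv k j i h p.1
  | _, _, _ => fun _ => 0

/-- Components `Γ̄^A_{BC}` of the metric connection `∇̄` of the complete lift metric `^C g`
(the horizontal lift `^H ∇` of the Levi-Civita connection of `g`). -/
def GammaBar (g ginv : (Fin n → ℝ) → Fin n → Fin n → ℝ) :
    Idx n → Idx n → Idx n → TPt n → ℝ
  | Sum.inl h, Sum.inl j, Sum.inl i => fun p => Christoffel g ginv h j i p.1
  | Sum.inr h, Sum.inr j, Sum.inl i => fun p => Christoffel g ginv h j i p.1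
  | Sum.inr h, Sum.inl j, Sum.inr i => fun p => Christoffel g ginv h j i p.1
  | Sum.inr h, Sum.inl j, Sum.inl i => fun p =>
      (∑ t, p.2 t * pd (fun z => Christoffel g ginv h j i z) t p.1)
        - ∑ k, p.2 k * Riem g ginv k j i h p.1
  | _, _, _ => fun _ => 0

/-- Vertical lift `^V H` of the `(1,2)`-tensor field `H`, as a difference of connections. -/
def vertH (g ginv a : (Fin n → ℝ) → Fin n → Fin n → ℝ) :
    Idx n → Idx n → Idx n → TPt n → ℝ
  | Sum.inr h, Sum.inl j, Sum.inl i => fun p => Hcoef g ginv a h j i p.1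
  | _, _, _ => fun _ => 0

/-- Covector field associated with a vector field `V` on `(T(M_n), ^S g)`. -/
def assocCov (g a : (Fin n → ℝ) → Fin n → Fin n → ℝ) (V : TPt n → Idx n → ℝ)
    (p : TPt n) (C : Idx n) : ℝ :=
  ∑ A, synMetric g a p C A * V p A

/-- The vertical vector field `ιC` with components `(0, yⁱ C_iᵏ)`. -/
def iotaT (C : (Fin n → ℝ) → Fin n → Fin n → ℝ) (p : TPt n) : Idx n → ℝ
  | Sum.inl _ => 0
  | Sum.inr k => ∑ i, p.2 i * C p.1 i k

/-- `X` is a Killing vector field of `(M_n, g)`: `∇_j X_i + ∇_i X_j = 0`. -/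
def IsKillingBase (g ginv : (Fin n → ℝ) → Fin n → Fin n → ℝ)
    (X : (Fin n → ℝ) → Fin n → ℝ) : Prop :=
  ∀ x j i, covCov g ginv (lower g X) j i x + covCov g ginv (lower g X) i j x = 0

/-- `V` is a harmonic vector field of `(T(M_n), ^S g)`: its associated covector field is
closed and coclosed w.r.t. the Levi-Civita connection of the synectic metric. -/
def IsHarmonicT (g ginv a : (Fin n → ℝ) → Fin n → Fin n → ℝ)
    (V : TPt n → Idx n → ℝ) : Prop :=
  (∀ p B A, covCovT (synMetric g a) (synMetricInv ginv a) (assocCov g a V) B A p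
      - covCovT (synMetric g a) (synMetricInv ginv a) (assocCov g a V) A B p = 0)
  ∧ (∀ p, ∑ B, ∑ A, synMetricInv ginv a p B A *
      covCovT (synMetric g a) (synMetricInv ginv a) (assocCov g a V) B A p = 0)

/-- `X` is a harmonic vector field of `(M_n, g)`: its associated `1`-form is closed and
coclosed. -/
def IsHarmonicBase (g ginv : (Fin n → ℝ) → Fin n → Fin n → ℝ)
    (X : (Fin n → ℝ) → Fin n → ℝ) : Prop :=
  (∀ x j i, covCov g ginv (lower g X) j i x - covCov g ginv (lower g X) i j x = 0)
  ∧ (∀ x, ∑ j, ∑ i, ginv x j i * covCov g ginv (lower g X) j i x = 0)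

/-- A vector field on `T(M_n)` is parallel w.r.t. a linear connection `Conn` if its covariant
derivative vanishes identically. -/
def IsParallelT (Conn : Idx n → Idx n → Idx n → TPt n → ℝ) (V : TPt n → Idx n → ℝ) : Prop :=
  ∀ p B A, covVecT Conn V B A p = 0

/-- `X` is parallel on `M_n`: `∇_j Xʰ = 0`. -/
def IsParallelBase (g ginv : (Fin n → ℝ) → Fin n → Fin n → ℝ)
    (X : (Fin n → ℝ) → Fin n → ℝ) : Prop :=
  ∀ x j h, covVec g ginv X j h x = 0

section Aux

variable {n : ℕ}

lemma contDiff_pd {F : (Fin n → ℝ) → ℝ} (hF : ContDiff ℝ (⊤ : ℕ∞) F) (j : Fin n) :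
    ContDiff ℝ (⊤ : ℕ∞) fun z => pd F j z :=
  (hF.fderiv_right (m := (⊤ : ℕ∞)) (by simp)).clm_apply contDiff_const

lemma pd_sum {ι : Type*} [Fintype ι] {F : ι → (Fin n → ℝ) → ℝ} {x : Fin n → ℝ}
    (hF : ∀ i, DifferentiableAt ℝ (F i) x) (j : Fin n) :
    pd (fun z => ∑ i, F i z) j x = ∑ i, pd (F i) j x := by
  unfold pd
  rw [fderiv_fun_sum (fun i _ => hF i)]
  simp

lemma pd_mul {F G : (Fin n → ℝ) → ℝ} {x : Fin n → ℝ}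
    (hF : DifferentiableAt ℝ F x) (hG : DifferentiableAt ℝ G x) (j : Fin n) :
    pd (fun z => F z * G z) j x = pd F j x * G x + F x * pd G j x := by
  unfold pd
  rw [fderiv_fun_mul hF hG]
  simp
  ring

lemma pdT_fst_inl {F : (Fin n → ℝ) → ℝ} {p : TPt n} (hF : DifferentiableAt ℝ F p.1)
    (j : Fin n) : pdT (fun q : TPt n => F q.1) (Sum.inl j) p = pd F j p.1 := by
  have h : HasFDerivAt (fun q : TPt n => F q.1)
      ((fderiv ℝ F p.1).comp (ContinuousLinearMap.fst ℝ (Fin n → ℝ) (Fin n → ℝ))) p :=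
    hF.hasFDerivAt.comp p hasFDerivAt_fst
  unfold pdT
  rw [h.fderiv]
  simp [eIdx, pd]

lemma pdT_fst_inr {F : (Fin n → ℝ) → ℝ} {p : TPt n} (hF : DifferentiableAt ℝ F p.1)
    (j : Fin n) : pdT (fun q : TPt n => F q.1) (Sum.inr j) p = 0 := by
  have h : HasFDerivAt (fun q : TPt n => F q.1)
      ((fderiv ℝ F p.1).comp (ContinuousLinearMap.fst ℝ (Fin n → ℝ) (Fin n → ℝ))) p :=
    hF.hasFDerivAt.comp p hasFDerivAt_fst
  unfold pdT
  rw [h.fderiv]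
  simp [eIdx]

lemma pdT_const (c : ℝ) (A : Idx n) (p : TPt n) : pdT (fun _ : TPt n => c) A p = 0 := by
  simp [pdT]

end Aux
section Aux2

variable {n : ℕ}

lemma hasFDerivAt_fiber {F : Fin n → (Fin n → ℝ) → ℝ} {p : TPt n}
    (hF : ∀ s, DifferentiableAt ℝ (F s) p.1) :
    HasFDerivAt (fun q : TPt n => ∑ s, q.2 s * F s q.1)
      (∑ s, (p.2 s • ((fderiv ℝ (F s) p.1).comp (ContinuousLinearMap.fst ℝ (Fin n → ℝ) (Fin n → ℝ)))
        + F s p.1 • ((ContinuousLinearMap.proj s).comp (ContinuousLinearMap.snd ℝ (Fin n → ℝ) (Fin n → ℝ))))) p := by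
  apply HasFDerivAt.fun_sum
  intro s _
  have h1 : HasFDerivAt (fun q : TPt n => q.2 s)
      ((ContinuousLinearMap.proj s).comp (ContinuousLinearMap.snd ℝ (Fin n → ℝ) (Fin n → ℝ))) p :=
    ((ContinuousLinearMap.proj (R := ℝ) (φ := fun _ : Fin n => ℝ) s).comp
      (ContinuousLinearMap.snd ℝ (Fin n → ℝ) (Fin n → ℝ))).hasFDerivAt
  have h2 : HasFDerivAt (fun q : TPt n => F s q.1)
      ((fderiv ℝ (F s) p.1).comp (ContinuousLinearMap.fst ℝ (Fin n → ℝ) (Fin n → ℝ))) p :=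
    (hF s).hasFDerivAt.comp p hasFDerivAt_fst
  exact h1.mul h2

lemma pdT_fiber_inr {F : Fin n → (Fin n → ℝ) → ℝ} {p : TPt n}
    (hF : ∀ s, DifferentiableAt ℝ (F s) p.1) (i : Fin n) :
    pdT (fun q : TPt n => ∑ s, q.2 s * F s q.1) (Sum.inr i) p = F i p.1 := by
  unfold pdT
  rw [(hasFDerivAt_fiber hF).fderiv]
  simp [eIdx, Pi.single_apply]

lemma pdT_syn_ll_inr (g a : (Fin n → ℝ) → Fin n → Fin n → ℝ)
    (hg : ∀ j i, ContDiff ℝ (⊤ : ℕ∞) fun z => g z j i)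
    (ha : ∀ j i, ContDiff ℝ (⊤ : ℕ∞) fun z => a z j i)
    (j i c : Fin n) (p : TPt n) :
    pdT (fun q => synMetric g a q (Sum.inl j) (Sum.inl i)) (Sum.inr c) p
      = pd (fun z => g z j i) c p.1 := by
  have e : (fun q : TPt n => synMetric g a q (Sum.inl j) (Sum.inl i))
      = fun q : TPt n => a q.1 j i + ∑ s, q.2 s * pd (fun z => g z j i) s q.1 := rfl
  rw [e]
  have hdF : ∀ s : Fin n, DifferentiableAt ℝ (fun z => pd (fun z' => g z' j i) s z) p.1 :=
    fun s => ((contDiff_pd (hg j i) s).differentiable (by simp)).differentiableAt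
  have h1 : HasFDerivAt (fun q : TPt n => a q.1 j i)
      ((fderiv ℝ (fun z => a z j i) p.1).comp (ContinuousLinearMap.fst ℝ (Fin n → ℝ) (Fin n → ℝ))) p :=
    (((ha j i).differentiable (by simp)) p.1).hasFDerivAt.comp p hasFDerivAt_fst
  have h2 := hasFDerivAt_fiber (F := fun s z => pd (fun z' => g z' j i) s z) hdF
  unfold pdT
  rw [(h1.fun_add h2).fderiv]
  simp [eIdx, Pi.single_apply]

end Aux2
section Aux3

variable {n : ℕ} (g ginv a : (Fin n → ℝ) → Fin n → Fin n → ℝ)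
  (X : (Fin n → ℝ) → Fin n → ℝ)

lemma lie_ll (hg : ∀ j i, ContDiff ℝ (⊤ : ℕ∞) fun z => g z j i)
    (ha : ∀ j i, ContDiff ℝ (⊤ : ℕ∞) fun z => a z j i)
    (hX : ∀ h, ContDiff ℝ (⊤ : ℕ∞) fun z => X z h) (j i : Fin n) (p : TPt n) :
    lieDerivT (synMetric g a) (vlift X) (Sum.inl j) (Sum.inl i) p
      = ∑ c, (X p.1 c * pd (fun z => g z j i) c p.1
          + g p.1 j c * pd (fun z => X z c) i p.1
          + g p.1 c i * pd (fun z => X z c) j p.1) := by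
  have hXd : ∀ c, DifferentiableAt ℝ (fun z => X z c) p.1 :=
    fun c => ((hX c).differentiable (by simp)).differentiableAt
  have hm : ∀ c : Fin n, pdT (fun q => synMetric g a q (Sum.inl j) (Sum.inl i)) (Sum.inr c) p
      = pd (fun z => g z j i) c p.1 := fun c => pdT_syn_ll_inr g a hg ha j i c p
  have hv0 : ∀ (c : Fin n) (A : Idx n), pdT (fun q => vlift X q (Sum.inl c)) A p = 0 :=
    fun c A => pdT_const 0 A p
  have hvX : ∀ (c j' : Fin n),
      pdT (fun q => vlift X q (Sum.inr c)) (Sum.inl j') p = pd (fun z => X z c) j' p.1 :=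
    fun c j' => pdT_fst_inl (hXd c) j'
  have hvl : ∀ c : Fin n, vlift X p (Sum.inl c) = 0 := fun c => rfl
  have hvr : ∀ c : Fin n, vlift X p (Sum.inr c) = X p.1 c := fun c => rfl
  have hs1 : ∀ c : Fin n, synMetric g a p (Sum.inl j) (Sum.inr c) = g p.1 j c := fun c => rfl
  have hs2 : ∀ c : Fin n, synMetric g a p (Sum.inr c) (Sum.inl i) = g p.1 c i := fun c => rfl
  unfold lieDerivT
  rw [Fintype.sum_sum_type]
  simp only [hvl, hvr, hm, hv0, hvX, hs1, hs2, zero_mul, mul_zero, add_zero, zero_add,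
    Finset.sum_const_zero]

lemma lie_lr (hg : ∀ j i, ContDiff ℝ (⊤ : ℕ∞) fun z => g z j i)
    (hX : ∀ h, ContDiff ℝ (⊤ : ℕ∞) fun z => X z h) (j i : Fin n) (p : TPt n) :
    lieDerivT (synMetric g a) (vlift X) (Sum.inl j) (Sum.inr i) p = 0 := by
  have hXd : ∀ c, DifferentiableAt ℝ (fun z => X z c) p.1 :=
    fun c => ((hX c).differentiable (by simp)).differentiableAt
  have hgd : DifferentiableAt ℝ (fun z => g z j i) p.1 :=
    ((hg j i).differentiable (by simp)).differentiableAt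
  have hm : ∀ c : Fin n, pdT (fun q => synMetric g a q (Sum.inl j) (Sum.inr i)) (Sum.inr c) p
      = 0 := fun c => pdT_fst_inr hgd c
  have hv0 : ∀ (c : Fin n) (A : Idx n), pdT (fun q => vlift X q (Sum.inl c)) A p = 0 :=
    fun c A => pdT_const 0 A p
  have hvXr : ∀ (c i' : Fin n),
      pdT (fun q => vlift X q (Sum.inr c)) (Sum.inr i') p = 0 :=
    fun c i' => pdT_fst_inr (hXd c) i'
  have hvl : ∀ c : Fin n, vlift X p (Sum.inl c) = 0 := fun c => rfl
  have hvr : ∀ c : Fin n, vlift X p (Sum.inr c) = X p.1 c := fun c => rfl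
  have hs3 : ∀ c : Fin n, synMetric g a p (Sum.inr c) (Sum.inr i) = 0 := fun c => rfl
  unfold lieDerivT
  rw [Fintype.sum_sum_type]
  simp only [hvl, hvr, hm, hv0, hvXr, hs3, zero_mul, mul_zero, add_zero, zero_add,
    Finset.sum_const_zero]

lemma lie_rl (hg : ∀ j i, ContDiff ℝ (⊤ : ℕ∞) fun z => g z j i)
    (hX : ∀ h, ContDiff ℝ (⊤ : ℕ∞) fun z => X z h) (j i : Fin n) (p : TPt n) :
    lieDerivT (synMetric g a) (vlift X) (Sum.inr j) (Sum.inl i) p = 0 := by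
  have hXd : ∀ c, DifferentiableAt ℝ (fun z => X z c) p.1 :=
    fun c => ((hX c).differentiable (by simp)).differentiableAt
  have hgd : DifferentiableAt ℝ (fun z => g z j i) p.1 :=
    ((hg j i).differentiable (by simp)).differentiableAt
  have hm : ∀ c : Fin n, pdT (fun q => synMetric g a q (Sum.inr j) (Sum.inl i)) (Sum.inr c) p
      = 0 := fun c => pdT_fst_inr hgd c
  have hv0 : ∀ (c : Fin n) (A : Idx n), pdT (fun q => vlift X q (Sum.inl c)) A p = 0 :=
    fun c A => pdT_const 0 A p
  have hvXr : ∀ (c i' : Fin n),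
      pdT (fun q => vlift X q (Sum.inr c)) (Sum.inr i') p = 0 :=
    fun c i' => pdT_fst_inr (hXd c) i'
  have hvl : ∀ c : Fin n, vlift X p (Sum.inl c) = 0 := fun c => rfl
  have hvr : ∀ c : Fin n, vlift X p (Sum.inr c) = X p.1 c := fun c => rfl
  have hs3 : ∀ c : Fin n, synMetric g a p (Sum.inr j) (Sum.inr c) = 0 := fun c => rfl
  unfold lieDerivT
  rw [Fintype.sum_sum_type]
  simp only [hvl, hvr, hm, hv0, hvXr, hs3, zero_mul, mul_zero, add_zero, zero_add,
    Finset.sum_const_zero]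

lemma lie_rr (hX : ∀ h, ContDiff ℝ (⊤ : ℕ∞) fun z => X z h) (j i : Fin n) (p : TPt n) :
    lieDerivT (synMetric g a) (vlift X) (Sum.inr j) (Sum.inr i) p = 0 := by
  have hm : ∀ c : Fin n, pdT (fun q => synMetric g a q (Sum.inr j) (Sum.inr i)) (Sum.inr c) p
      = 0 := fun c => pdT_const 0 _ p
  have hv0 : ∀ (c : Fin n) (A : Idx n), pdT (fun q => vlift X q (Sum.inl c)) A p = 0 :=
    fun c A => pdT_const 0 A p
  have hvl : ∀ c : Fin n, vlift X p (Sum.inl c) = 0 := fun c => rfl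
  have hs3 : ∀ c : Fin n, synMetric g a p (Sum.inr j) (Sum.inr c) = 0 := fun c => rfl
  have hs4 : ∀ c : Fin n, synMetric g a p (Sum.inr c) (Sum.inr i) = 0 := fun c => rfl
  unfold lieDerivT
  rw [Fintype.sum_sum_type]
  simp only [hvl, hm, hv0, hs3, hs4, zero_mul, mul_zero, add_zero, zero_add,
    Finset.sum_const_zero]

end Aux3
section Aux4

variable {n : ℕ} (g ginv : (Fin n → ℝ) → Fin n → Fin n → ℝ)
  (X : (Fin n → ℝ) → Fin n → ℝ)

lemma pd_lower (hg : ∀ j i, ContDiff ℝ (⊤ : ℕ∞) fun z => g z j i)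
    (hX : ∀ h, ContDiff ℝ (⊤ : ℕ∞) fun z => X z h) (j i : Fin n) (x : Fin n → ℝ) :
    pd (fun z => lower g X z i) j x
      = ∑ h, (pd (fun z => g z i h) j x * X x h + g x i h * pd (fun z => X z h) j x) := by
  have hgd : ∀ a b, DifferentiableAt ℝ (fun z => g z a b) x :=
    fun a b => ((hg a b).differentiable (by simp)).differentiableAt
  have hXd : ∀ c, DifferentiableAt ℝ (fun z => X z c) x :=
    fun c => ((hX c).differentiable (by simp)).differentiableAt
  have e : (fun z => lower g X z i) = fun z => ∑ h, g z i h * X z h := rfl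
  rw [e, pd_sum (fun h => (hgd i h).fun_mul (hXd h)) j]
  exact Finset.sum_congr rfl fun h _ => pd_mul (hgd i h) (hXd h) j

lemma chr_contract (hgsymm : ∀ x j i, g x j i = g x i j)
    (hinv : ∀ x j k, ∑ i, g x j i * ginv x i k = if j = k then (1 : ℝ) else 0)
    (j i : Fin n) (x : Fin n → ℝ) :
    ∑ k, Christoffel g ginv k j i x * lower g X x k
      = ∑ s, (1 / 2) * (X x s * (pd (fun z => g z s i) j x + pd (fun z => g z j s) i x
          - pd (fun z => g z j i) s x)) := by
  set T : Fin n → ℝ := fun s => pd (fun z => g z s i) j x + pd (fun z => g z j s) i x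
      - pd (fun z => g z j i) s x with hT
  have key : ∀ (c : ℝ) (A B : Fin n → ℝ), (c * ∑ s, A s) * (∑ h, B h)
      = ∑ s, ∑ h, c * A s * B h := by
    intro c A B
    simp only [Finset.mul_sum, Finset.sum_mul]
    rw [Finset.sum_comm]
  have hdelta : ∀ h s : Fin n, ∑ k, ginv x k s * g x k h = if h = s then (1:ℝ) else 0 := by
    intro h s
    rw [← hinv x h s]
    exact Finset.sum_congr rfl fun k _ => by rw [hgsymm x k h]; ring
  calc ∑ k, Christoffel g ginv k j i x * lower g X x k
      = ∑ k, ∑ s, ∑ h, (1/2) * (ginv x k s * T s) * (g x k h * X x h) := by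
        apply Finset.sum_congr rfl
        intro k _
        exact key (1/2) (fun s => ginv x k s * T s) (fun h => g x k h * X x h)
    _ = ∑ s, ∑ h, ∑ k, (1/2) * (ginv x k s * T s) * (g x k h * X x h) := by
        rw [Finset.sum_comm]
        exact Finset.sum_congr rfl fun s _ => by rw [Finset.sum_comm]
    _ = ∑ s, ∑ h, ((1/2) * T s * X x h) * (∑ k, ginv x k s * g x k h) := by
        apply Finset.sum_congr rfl; intro s _
        apply Finset.sum_congr rfl; intro h _
        rw [Finset.mul_sum]
        exact Finset.sum_congr rfl fun k _ => by ring
    _ = ∑ s, ∑ h, ((1/2) * T s * X x h) * (if h = s then 1 else 0) := by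
        apply Finset.sum_congr rfl; intro s _
        exact Finset.sum_congr rfl fun h _ => by rw [hdelta h s]
    _ = ∑ s, (1/2) * (X x s * T s) := by
        apply Finset.sum_congr rfl; intro s _
        simp only [mul_ite, mul_one, mul_zero]
        rw [Finset.sum_ite_eq' Finset.univ s (fun h => (1/2) * T s * X x h)]
        simp only [Finset.mem_univ, if_true]
        ring

lemma killing_base_expand (hg : ∀ j i, ContDiff ℝ (⊤ : ℕ∞) fun z => g z j i)
    (hgsymm : ∀ x j i, g x j i = g x i j)
    (hinv : ∀ x j k, ∑ i, g x j i * ginv x i k = if j = k then (1 : ℝ) else 0)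
    (hX : ∀ h, ContDiff ℝ (⊤ : ℕ∞) fun z => X z h) (j i : Fin n) (x : Fin n → ℝ) :
    covCov g ginv (lower g X) j i x + covCov g ginv (lower g X) i j x
      = ∑ c, (X x c * pd (fun z => g z j i) c x
          + g x j c * pd (fun z => X z c) i x
          + g x c i * pd (fun z => X z c) j x) := by
  have hpg : ∀ a b : Fin n, (fun z => g z a b) = (fun z => g z b a) :=
    fun a b => funext fun z => hgsymm z a b
  unfold covCov
  rw [pd_lower g X hg hX j i x, pd_lower g X hg hX i j x,
    chr_contract g ginv X hgsymm hinv j i x, chr_contract g ginv X hgsymm hinv i j x,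
    ← Finset.sum_sub_distrib, ← Finset.sum_sub_distrib, ← Finset.sum_add_distrib]
  apply Finset.sum_congr rfl
  intro c _
  rw [hpg i c, hpg c j, hpg i j, hgsymm x i c]
  ring

end Aux4
/-- The vertical lift `^V X` of a vector field `X` on `M_n` to the tangent
bundle `T(M_n)` with the synectic metric `^S g` is a Killing vector field on `T(M_n)` if and
only if `X` is a Killing vector field on `(M_n, g)`. -/
theorem vertical_lift_killing_iff {n : ℕ}
    (g ginv a : (Fin n → ℝ) → Fin n → Fin n → ℝ)
    (X : (Fin n → ℝ) → Fin n → ℝ)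
    (hg : ∀ j i, ContDiff ℝ (⊤ : ℕ∞) fun z => g z j i)
    (hgsymm : ∀ x j i, g x j i = g x i j)
    (hpos : ∀ (x v : Fin n → ℝ), v ≠ 0 → 0 < ∑ j, ∑ i, g x j i * v j * v i)
    (hginv : ∀ j i, ContDiff ℝ (⊤ : ℕ∞) fun z => ginv z j i)
    (hinv : ∀ x j k, ∑ i, g x j i * ginv x i k = if j = k then (1 : ℝ) else 0)
    (ha : ∀ j i, ContDiff ℝ (⊤ : ℕ∞) fun z => a z j i)
    (hasymm : ∀ x j i, a x j i = a x i j)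
    (hX : ∀ h, ContDiff ℝ (⊤ : ℕ∞) fun z => X z h)
    : IsKillingT (synMetric g a) (vlift X) ↔ IsKillingBase g ginv X := by
  constructor
  · intro hK x j i
    have h := hK (x, 0) (Sum.inl j) (Sum.inl i)
    rw [lie_ll g a X hg ha hX j i (x, 0)] at h
    rw [killing_base_expand g ginv X hg hgsymm hinv hX j i x]
    exact h
  · intro hK p A B
    rcases A with j | j <;> rcases B with i | i
    · rw [lie_ll g a X hg ha hX j i p, ← killing_base_expand g ginv X hg hgsymm hinv hX j i p.1]
      exact hK p.1 j i
    · exact lie_lr g a X hg hX j i p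
    · exact lie_rl g a X hg hX j i p
    · exact lie_rr g a X hX j i p

end Synectic
end
end

section
/- The vertical lift ^V X of a vector field X on M_n is parallel on T(M_n) with respect to the metric connection ∇̃ of the synectic metric ^S g (i.e. ∇̃ ^V X = 0) if and only if X is parallel on M_n (i.e. ∇X = 0). -/
open scoped BigOperators

noncomputable section

namespace Synectic

variable {n : ℕ}

/-- Derivative on `T(M_n)` of a function pulled back from the base. -/
lemma pdT_base {n : ℕ} (f : (Fin n → ℝ) → ℝ) (hf : Differentiable ℝ f)
    (A : Idx n) (p : TPt n) :
    pdT (fun q => f q.1) A p =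
      match A with
      | Sum.inl j => pd f j p.1
      | Sum.inr _ => 0 := by
  have h : HasFDerivAt (fun q : TPt n => f q.1)
      ((fderiv ℝ f p.1).comp (ContinuousLinearMap.fst ℝ (Fin n → ℝ) (Fin n → ℝ))) p :=
    (hf p.1).hasFDerivAt.comp p (hasFDerivAt_fst)
  have hd : fderiv ℝ (fun q : TPt n => f q.1) p
      = (fderiv ℝ f p.1).comp (ContinuousLinearMap.fst ℝ (Fin n → ℝ) (Fin n → ℝ)) :=
    h.fderiv
  cases A with
  | inl j => simp [pdT, hd, eIdx, pd]
  | inr j => simp [pdT, hd, eIdx]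

/-- The vertical lift `^V X` is parallel on `T(M_n)` w.r.t. the metric
connection `∇̃` of the synectic metric iff `X` is parallel on `M_n`. -/
theorem vertical_lift_parallel_iff {n : ℕ}
    (g ginv a : (Fin n → ℝ) → Fin n → Fin n → ℝ)
    (X : (Fin n → ℝ) → Fin n → ℝ)
    (hg : ∀ j i, ContDiff ℝ (⊤ : ℕ∞) fun z => g z j i)
    (hgsymm : ∀ x j i, g x j i = g x i j)
    (hpos : ∀ (x v : Fin n → ℝ), v ≠ 0 → 0 < ∑ j, ∑ i, g x j i * v j * v i)
    (hginv : ∀ j i, ContDiff ℝ (⊤ : ℕ∞) fun z => ginv z j i)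
    (hinv : ∀ x j k, ∑ i, g x j i * ginv x i k = if j = k then (1 : ℝ) else 0)
    (ha : ∀ j i, ContDiff ℝ (⊤ : ℕ∞) fun z => a z j i)
    (hasymm : ∀ x j i, a x j i = a x i j)
    (hX : ∀ h, ContDiff ℝ (⊤ : ℕ∞) fun z => X z h)
    : IsParallelT (GammaTilde g ginv a) (vlift X) ↔ IsParallelBase g ginv X := by
  have key : ∀ (p : TPt n) (B A : Idx n),
      covVecT (GammaTilde g ginv a) (vlift X) B A p =
        match A, B with
        | Sum.inr h, Sum.inl j => covVec g ginv X j h p.1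
        | _, _ => 0 := by
    intro p B A
    cases A with
    | inl h =>
      have hz : pdT (fun q => vlift X q (Sum.inl h)) B p = 0 := by
        simp only [vlift]
        cases B with
        | inl j =>
          simpa [pd] using pdT_base (n := n) (fun _ => (0 : ℝ)) (by fun_prop) (Sum.inl j) p
        | inr j =>
          simpa using pdT_base (n := n) (fun _ => (0 : ℝ)) (by fun_prop) (Sum.inr j) p
      simp only [covVecT, hz, zero_add]
      rw [Fintype.sum_sum_type]
      cases B <;> simp [GammaTilde, vlift]
    | inr h =>
      have hpd : pdT (fun q => vlift X q (Sum.inr h)) B p =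
          match B with
          | Sum.inl j => pd (fun z => X z h) j p.1
          | Sum.inr _ => 0 := by
        simpa [vlift] using pdT_base (n := n) (fun z => X z h) ((hX h).differentiable (by simp)) B p
      simp only [covVecT, hpd]
      rw [Fintype.sum_sum_type]
      cases B with
      | inl j => simp [GammaTilde, vlift, covVec]
      | inr j => simp [GammaTilde, vlift]
  constructor
  · intro hP x j h
    have := hP (x, 0) (Sum.inl j) (Sum.inr h)
    rw [key] at this
    simpa using this
  · intro hP p B A
    rw [key]
    cases A with
    | inl h => cases B <;> simp
    | inr h =>
      cases B with
      | inl j => exact hP p.1 j h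
      | inr j => simp

end Synectic
end
end
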